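/- arXiv:2605.29865 — 2 statements merged into one kernel-verified Lean document; each statement's English description precedes it below -/
import Mathlib

section
/- Let g be a Leibniz algebra satisfying the maximal chain condition on two-sided ideals (every ascending chain of two-sided ideals of g terminates). Then for any two-sided ideal H of g, there exist finitely many prime ideals P_1, …, P_m of g, each containing H, such that the intersection of all prime ideals of g containing H equals P_1 ∩ ⋯ ∩ P_m. -/
universe u v

/-- A (left) Leibniz algebra over a field `K`: a `K`-vector space with a bilinear
bracket satisfying the left Leibniz identity. -/
class LeibnizAlgebra (K : Type u) (g : Type v) [Field K] [AddCommGroup g] [Module K g]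
    extends Bracket g g where
  add_bracket : ∀ x y z : g, ⁅x + y, z⁆ = ⁅x, z⁆ + ⁅y, z⁆
  bracket_add : ∀ x y z : g, ⁅x, y + z⁆ = ⁅x, y⁆ + ⁅x, z⁆
  smul_bracket : ∀ (c : K) (x y : g), ⁅c • x, y⁆ = c • ⁅x, y⁆
  bracket_smul : ∀ (c : K) (x y : g), ⁅x, c • y⁆ = c • ⁅x, y⁆
  leibniz : ∀ x y z : g, ⁅x, ⁅y, z⁆⁆ = ⁅⁅x, y⁆, z⁆ + ⁅y, ⁅x, z⁆⁆

namespace Leibniz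

section Defs

variable (K : Type u) (g : Type v) [Field K] [AddCommGroup g] [Module K g] [LeibnizAlgebra K g]

lemma zero_bracket (y : g) : ⁅(0 : g), y⁆ = 0 := by
  have h := LeibnizAlgebra.smul_bracket (0 : K) (0 : g) y
  simpa using h

lemma bracket_zero (y : g) : ⁅y, (0 : g)⁆ = 0 := by
  have h := LeibnizAlgebra.bracket_smul (0 : K) y (0 : g)
  simpa using h

lemma neg_bracket (x y : g) : ⁅-x, y⁆ = -⁅x, y⁆ := by
  have h := LeibnizAlgebra.smul_bracket (-1 : K) x y
  simpa using h

lemma bracket_neg (x y : g) : ⁅x, -y⁆ = -⁅x, y⁆ := by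
  have h := LeibnizAlgebra.bracket_smul (-1 : K) x y
  simpa using h

lemma sub_bracket (x x' y : g) : ⁅x - x', y⁆ = ⁅x, y⁆ - ⁅x', y⁆ := by
  rw [sub_eq_add_neg, LeibnizAlgebra.add_bracket, neg_bracket K, ← sub_eq_add_neg]

lemma bracket_sub (x y y' : g) : ⁅x, y - y'⁆ = ⁅x, y⁆ - ⁅x, y'⁆ := by
  rw [sub_eq_add_neg, LeibnizAlgebra.bracket_add, bracket_neg K, ← sub_eq_add_neg]

/-- A (two-sided) ideal of a Leibniz algebra: a subspace `I` with `⁅g,I⁆ ⊆ I` and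
`⁅I,g⁆ ⊆ I`. -/
def IsIdeal (I : Submodule K g) : Prop :=
  ∀ x : g, ∀ a ∈ I, ⁅x, a⁆ ∈ I ∧ ⁅a, x⁆ ∈ I

/-- The bracket `[A, B]` of two subspaces: the span of all brackets `⁅a, b⁆`. -/
def bk (A B : Submodule K g) : Submodule K g :=
  Submodule.span K {z : g | ∃ a ∈ A, ∃ b ∈ B, z = ⁅a, b⁆}

/-- The derived series of a subspace `I`, computed in `g`:
`I^(0) = I`, `I^(n+1) = [I^(n), I^(n)]`. -/
def subDerived (I : Submodule K g) : ℕ → Submodule K g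
  | 0 => I
  | n + 1 => bk K g (subDerived I n) (subDerived I n)

/-- The derived series of `g`: `g^(0) = g`, `g^(n+1) = [g^(n), g^(n)]`. -/
def derived : ℕ → Submodule K g := subDerived K g ⊤

/-- A Leibniz algebra is solvable if `g^(n) = 0` for some `n`. -/
def IsSolvable : Prop := ∃ n : ℕ, derived K g n = ⊥

/-- A Leibniz algebra is abelian if its bracket is identically zero. -/
def IsAbelian : Prop := ∀ x y : g, ⁅x, y⁆ = 0

/-- A nonzero Leibniz algebra is simple if its only two-sided ideals are `⊥` and `⊤`. -/
def IsSimpleAlg : Prop :=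
  (∃ x : g, x ≠ 0) ∧ ∀ I : Submodule K g, IsIdeal K g I → I = ⊥ ∨ I = ⊤

/-- A Leibniz algebra `g` is quasi-Artinian if for every descending chain of ideals
`I_1 ⊇ I_2 ⊇ ⋯` there is `m` with `[g^(m), I_m] ⊆ I_n` and `[I_m, g^(m)] ⊆ I_n` for all `n`. -/
def QuasiArtinian : Prop :=
  ∀ I : ℕ → Submodule K g, (∀ n, IsIdeal K g (I n)) → (∀ n, I (n + 1) ≤ I n) →
    ∃ m : ℕ, ∀ n : ℕ,
      bk K g (derived K g m) (I m) ≤ I n ∧ bk K g (I m) (derived K g m) ≤ I n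

/-- A Leibniz algebra is Artinian if every descending chain of two-sided ideals stabilizes. -/
def ArtinianAlg : Prop :=
  ∀ I : ℕ → Submodule K g, (∀ n, IsIdeal K g (I n)) → (∀ n, I (n + 1) ≤ I n) →
    ∃ m : ℕ, ∀ n : ℕ, m ≤ n → I n = I m

/-- A solvable ideal: an ideal which is solvable (as a Leibniz algebra). -/
def IsSolvableIdeal (I : Submodule K g) : Prop :=
  IsIdeal K g I ∧ ∃ n : ℕ, subDerived K g I n = ⊥

/-- An abelian ideal: an ideal whose bracket vanishes identically. -/
def IsAbelianIdeal (I : Submodule K g) : Prop :=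
  IsIdeal K g I ∧ ∀ x ∈ I, ∀ y ∈ I, ⁅x, y⁆ = (0 : g)

/-- Minimal condition on solvable ideals: every descending chain of solvable
two-sided ideals stabilizes. -/
def MinOnSolvableIdeals : Prop :=
  ∀ I : ℕ → Submodule K g, (∀ n, IsSolvableIdeal K g (I n)) → (∀ n, I (n + 1) ≤ I n) →
    ∃ m : ℕ, ∀ n : ℕ, m ≤ n → I n = I m

/-- Minimal condition on abelian ideals: every descending chain of abelian
two-sided ideals stabilizes. -/
def MinOnAbelianIdeals : Prop :=
  ∀ I : ℕ → Submodule K g, (∀ n, IsAbelianIdeal K g (I n)) → (∀ n, I (n + 1) ≤ I n) →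
    ∃ m : ℕ, ∀ n : ℕ, m ≤ n → I n = I m

/-- `I` is a two-sided ideal of the subalgebra `A` (both viewed as subspaces of `g`). -/
def IsIdealIn (A I : Submodule K g) : Prop :=
  I ≤ A ∧ ∀ x ∈ A, ∀ a ∈ I, ⁅x, a⁆ ∈ I ∧ ⁅a, x⁆ ∈ I

/-- A prime ideal: a proper two-sided ideal `P` such that `[h₁, h₂] ⊆ P` for ideals
`h₁, h₂` forces `h₁ ⊆ P` or `h₂ ⊆ P`. -/
def IsPrimeIdeal (P : Submodule K g) : Prop :=
  IsIdeal K g P ∧ P ≠ ⊤ ∧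
    ∀ h₁ h₂ : Submodule K g, IsIdeal K g h₁ → IsIdeal K g h₂ →
      bk K g h₁ h₂ ≤ P → h₁ ≤ P ∨ h₂ ≤ P

/-- `Leib(g)`: the subspace spanned by all squares `⁅x, x⁆`. -/
def leibIdeal : Submodule K g :=
  Submodule.span K {z : g | ∃ x : g, z = ⁅x, x⁆}

/-- Given a subspace `C`, the preimage of the center of `g/C`:
all `x` with `⁅x, y⁆ ∈ C` and `⁅y, x⁆ ∈ C` for every `y`. -/
def centerStep (C : Submodule K g) : Submodule K g where
  carrier := {x : g | ∀ y : g, ⁅x, y⁆ ∈ C ∧ ⁅y, x⁆ ∈ C}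
  add_mem' := by
    intro a b ha hb
    intro y
    constructor
    · rw [LeibnizAlgebra.add_bracket]; exact C.add_mem (ha y).1 (hb y).1
    · rw [LeibnizAlgebra.bracket_add]; exact C.add_mem (ha y).2 (hb y).2
  zero_mem' := by
    intro y
    constructor
    · rw [zero_bracket K]; exact C.zero_mem
    · rw [bracket_zero K]; exact C.zero_mem
  smul_mem' := by
    intro c a ha y
    constructor
    · rw [LeibnizAlgebra.smul_bracket]; exact C.smul_mem c (ha y).1
    · rw [LeibnizAlgebra.bracket_smul]; exact C.smul_mem c (ha y).2

/-- The transfinite upper central series of `g`: `ζ_0 = 0`,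
`ζ_{α+1}/ζ_α = Z(g/ζ_α)`, and `ζ_ρ = ⋃_{α<ρ} ζ_α` at limit ordinals. -/
noncomputable def zeta : Ordinal.{0} → Submodule K g := fun o =>
  Ordinal.limitRecOn o ⊥ (fun _ C => centerStep K g C)
    (fun o _ ih => ⨆ (a : Ordinal.{0}) (h : a < o), ih a h)

/-- `g` is hypercentral if `ζ_α(g) = g` for some ordinal `α`. -/
def Hypercentral : Prop := ∃ o : Ordinal.{0}, zeta K g o = ⊤

end Defs

section Quotient

variable {K : Type u} {g : Type v} [Field K] [AddCommGroup g] [Module K g] [LeibnizAlgebra K g]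

/-- The bracket induced on the quotient `g ⧸ I` by a two-sided ideal `I`. -/
def quotBracket (I : Submodule K g) (hI : IsIdeal K g I) : g ⧸ I → g ⧸ I → g ⧸ I :=
  Quotient.map₂ (fun x y : g => ⁅x, y⁆) (by
    intro x x' hx y y' hy
    have hx' : x - x' ∈ I := (Submodule.quotientRel_def I).1 hx
    have hy' : y - y' ∈ I := (Submodule.quotientRel_def I).1 hy
    refine (Submodule.quotientRel_def I).2 ?_
    have key : ⁅x, y⁆ - ⁅x', y'⁆ = ⁅x - x', y⁆ + ⁅x', y - y'⁆ := by
      rw [sub_bracket K, bracket_sub K]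
      abel
    rw [key]
    exact I.add_mem (hI y (x - x') hx').2 (hI x' (y - y') hy').1)

@[simp] lemma quotBracket_mk (I : Submodule K g) (hI : IsIdeal K g I) (x y : g) :
    quotBracket I hI (Submodule.Quotient.mk x) (Submodule.Quotient.mk y) =
      Submodule.Quotient.mk ⁅x, y⁆ := rfl

/-- The quotient Leibniz algebra `g ⧸ I` of `g` by a two-sided ideal `I`. -/
def quotLeibniz (I : Submodule K g) (hI : IsIdeal K g I) : LeibnizAlgebra K (g ⧸ I) where
  bracket := quotBracket I hI
  add_bracket X Y Z := by
    obtain ⟨x, rfl⟩ := Submodule.Quotient.mk_surjective I X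
    obtain ⟨y, rfl⟩ := Submodule.Quotient.mk_surjective I Y
    obtain ⟨z, rfl⟩ := Submodule.Quotient.mk_surjective I Z
    show quotBracket I hI (Submodule.Quotient.mk x + Submodule.Quotient.mk y)
        (Submodule.Quotient.mk z) = _
    rw [← Submodule.Quotient.mk_add, quotBracket_mk]
    show _ = quotBracket I hI (Submodule.Quotient.mk x) (Submodule.Quotient.mk z) +
      quotBracket I hI (Submodule.Quotient.mk y) (Submodule.Quotient.mk z)
    rw [quotBracket_mk, quotBracket_mk, ← Submodule.Quotient.mk_add,
      LeibnizAlgebra.add_bracket]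
  bracket_add X Y Z := by
    obtain ⟨x, rfl⟩ := Submodule.Quotient.mk_surjective I X
    obtain ⟨y, rfl⟩ := Submodule.Quotient.mk_surjective I Y
    obtain ⟨z, rfl⟩ := Submodule.Quotient.mk_surjective I Z
    show quotBracket I hI (Submodule.Quotient.mk x)
        (Submodule.Quotient.mk y + Submodule.Quotient.mk z) = _
    rw [← Submodule.Quotient.mk_add, quotBracket_mk]
    show _ = quotBracket I hI (Submodule.Quotient.mk x) (Submodule.Quotient.mk y) +
      quotBracket I hI (Submodule.Quotient.mk x) (Submodule.Quotient.mk z)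
    rw [quotBracket_mk, quotBracket_mk, ← Submodule.Quotient.mk_add,
      LeibnizAlgebra.bracket_add]
  smul_bracket c X Y := by
    obtain ⟨x, rfl⟩ := Submodule.Quotient.mk_surjective I X
    obtain ⟨y, rfl⟩ := Submodule.Quotient.mk_surjective I Y
    show quotBracket I hI (c • Submodule.Quotient.mk x) (Submodule.Quotient.mk y) =
      c • quotBracket I hI (Submodule.Quotient.mk x) (Submodule.Quotient.mk y)
    rw [← Submodule.Quotient.mk_smul, quotBracket_mk, quotBracket_mk,
      ← Submodule.Quotient.mk_smul, LeibnizAlgebra.smul_bracket]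
  bracket_smul c X Y := by
    obtain ⟨x, rfl⟩ := Submodule.Quotient.mk_surjective I X
    obtain ⟨y, rfl⟩ := Submodule.Quotient.mk_surjective I Y
    show quotBracket I hI (Submodule.Quotient.mk x) (c • Submodule.Quotient.mk y) =
      c • quotBracket I hI (Submodule.Quotient.mk x) (Submodule.Quotient.mk y)
    rw [← Submodule.Quotient.mk_smul, quotBracket_mk, quotBracket_mk,
      ← Submodule.Quotient.mk_smul, LeibnizAlgebra.bracket_smul]
  leibniz X Y Z := by
    obtain ⟨x, rfl⟩ := Submodule.Quotient.mk_surjective I X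
    obtain ⟨y, rfl⟩ := Submodule.Quotient.mk_surjective I Y
    obtain ⟨z, rfl⟩ := Submodule.Quotient.mk_surjective I Z
    show quotBracket I hI (Submodule.Quotient.mk x)
        (quotBracket I hI (Submodule.Quotient.mk y) (Submodule.Quotient.mk z)) = _
    rw [quotBracket_mk, quotBracket_mk]
    show _ = quotBracket I hI
        (quotBracket I hI (Submodule.Quotient.mk x) (Submodule.Quotient.mk y))
        (Submodule.Quotient.mk z) +
      quotBracket I hI (Submodule.Quotient.mk y)
        (quotBracket I hI (Submodule.Quotient.mk x) (Submodule.Quotient.mk z))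
    rw [quotBracket_mk, quotBracket_mk, quotBracket_mk, quotBracket_mk,
      ← Submodule.Quotient.mk_add, LeibnizAlgebra.leibniz]

/-- A two-sided ideal of a Leibniz algebra, regarded as a Leibniz algebra itself. -/
def idealLeibniz (I : Submodule K g) (hI : IsIdeal K g I) : LeibnizAlgebra K I where
  bracket a b := ⟨⁅(a : g), (b : g)⁆, (hI (a : g) (b : g) b.2).1⟩
  add_bracket a b c := Subtype.ext (by
    show ⁅((a + b : I) : g), (c : g)⁆ = ⁅(a : g), (c : g)⁆ + ⁅(b : g), (c : g)⁆
    rw [Submodule.coe_add, LeibnizAlgebra.add_bracket])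
  bracket_add a b c := Subtype.ext (by
    show ⁅(a : g), ((b + c : I) : g)⁆ = ⁅(a : g), (b : g)⁆ + ⁅(a : g), (c : g)⁆
    rw [Submodule.coe_add, LeibnizAlgebra.bracket_add])
  smul_bracket c a b := Subtype.ext (by
    show ⁅((c • a : I) : g), (b : g)⁆ = c • ⁅(a : g), (b : g)⁆
    rw [Submodule.coe_smul, LeibnizAlgebra.smul_bracket])
  bracket_smul c a b := Subtype.ext (by
    show ⁅(a : g), ((c • b : I) : g)⁆ = c • ⁅(a : g), (b : g)⁆
    rw [Submodule.coe_smul, LeibnizAlgebra.bracket_smul])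
  leibniz a b c := Subtype.ext (by
    show ⁅(a : g), ⁅(b : g), (c : g)⁆⁆ =
      ⁅⁅(a : g), (b : g)⁆, (c : g)⁆ + ⁅(b : g), ⁅(a : g), (c : g)⁆⁆
    exact LeibnizAlgebra.leibniz (a : g) (b : g) (c : g))

end Quotient

section Constructions

variable {K : Type u} [Field K]

/-- The direct sum of two Leibniz algebras, with componentwise bracket. -/
instance prodLeibniz (g₁ : Type v) (g₂ : Type v) [AddCommGroup g₁] [Module K g₁]
    [LeibnizAlgebra K g₁] [AddCommGroup g₂] [Module K g₂] [LeibnizAlgebra K g₂] :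
    LeibnizAlgebra K (g₁ × g₂) where
  bracket x y := (⁅x.1, y.1⁆, ⁅x.2, y.2⁆)
  add_bracket x y z := Prod.ext_iff.2
    ⟨LeibnizAlgebra.add_bracket x.1 y.1 z.1, LeibnizAlgebra.add_bracket x.2 y.2 z.2⟩
  bracket_add x y z := Prod.ext_iff.2
    ⟨LeibnizAlgebra.bracket_add x.1 y.1 z.1, LeibnizAlgebra.bracket_add x.2 y.2 z.2⟩
  smul_bracket c x y := Prod.ext_iff.2
    ⟨LeibnizAlgebra.smul_bracket c x.1 y.1, LeibnizAlgebra.smul_bracket c x.2 y.2⟩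
  bracket_smul c x y := Prod.ext_iff.2
    ⟨LeibnizAlgebra.bracket_smul c x.1 y.1, LeibnizAlgebra.bracket_smul c x.2 y.2⟩
  leibniz x y z := Prod.ext_iff.2
    ⟨LeibnizAlgebra.leibniz x.1 y.1 z.1, LeibnizAlgebra.leibniz x.2 y.2 z.2⟩

/-- The direct sum of countably many copies of a Leibniz algebra `H`
(finitely supported sequences), with componentwise bracket. -/
noncomputable instance finsuppLeibniz (H : Type v) [AddCommGroup H] [Module K H]
    [LeibnizAlgebra K H] : LeibnizAlgebra K (ℕ →₀ H) where
  bracket f h := Finsupp.zipWith (fun a b : H => ⁅a, b⁆) (zero_bracket K H 0) f h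
  add_bracket f f' h := by
    ext i
    simp only [Finsupp.zipWith_apply, Finsupp.add_apply]
    exact LeibnizAlgebra.add_bracket (f i) (f' i) (h i)
  bracket_add f h h' := by
    ext i
    simp only [Finsupp.zipWith_apply, Finsupp.add_apply]
    exact LeibnizAlgebra.bracket_add (f i) (h i) (h' i)
  smul_bracket c f h := by
    ext i
    simp only [Finsupp.zipWith_apply, Finsupp.smul_apply]
    exact LeibnizAlgebra.smul_bracket c (f i) (h i)
  bracket_smul c f h := by
    ext i
    simp only [Finsupp.zipWith_apply, Finsupp.smul_apply]
    exact LeibnizAlgebra.bracket_smul c (f i) (h i)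
  leibniz f h k := by
    ext i
    simp only [Finsupp.zipWith_apply, Finsupp.add_apply]
    exact LeibnizAlgebra.leibniz (f i) (h i) (k i)

end Constructions

end Leibniz

open Leibniz


lemma sup_isIdeal {K : Type u} {g : Type v} [Field K] [AddCommGroup g] [Module K g]
    [LeibnizAlgebra K g] {A B : Submodule K g} (hA : IsIdeal K g A) (hB : IsIdeal K g B) :
    IsIdeal K g (A ⊔ B) := by
  intro x a ha
  rcases Submodule.mem_sup.1 ha with ⟨y, hy, z, hz, rfl⟩
  constructor
  · rw [LeibnizAlgebra.bracket_add]
    exact Submodule.add_mem _ (Submodule.mem_sup_left (hA x y hy).1)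
      (Submodule.mem_sup_right (hB x z hz).1)
  · rw [LeibnizAlgebra.add_bracket]
    exact Submodule.add_mem _ (Submodule.mem_sup_left (hA x y hy).2)
      (Submodule.mem_sup_right (hB x z hz).2)

/-- If `g` satisfies the maximal condition on two-sided ideals, then for every ideal `H`
the intersection of all prime ideals containing `H` is an intersection of finitely many
prime ideals containing `H`. -/
theorem primeRadical_eq_finite_inter_of_maxCondition (K : Type u) (g : Type v) [Field K] [AddCommGroup g] [Module K g]
    [LeibnizAlgebra K g]
    (hmax : ∀ I : ℕ → Submodule K g, (∀ n, IsIdeal K g (I n)) → (∀ n, I n ≤ I (n + 1)) →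
      ∃ m : ℕ, ∀ n : ℕ, m ≤ n → I n = I m)
    (H : Submodule K g) (hH : IsIdeal K g H) :
    ∃ S : Finset (Submodule K g),
      (∀ P ∈ S, IsPrimeIdeal K g P ∧ H ≤ P) ∧
      sInf {P : Submodule K g | IsPrimeIdeal K g P ∧ H ≤ P} = S.inf id := by
  classical
  by_contra hc
  set T : Set (Submodule K g) := {J | IsIdeal K g J ∧
    ¬ ∃ S : Finset (Submodule K g), (∀ P ∈ S, IsPrimeIdeal K g P ∧ J ≤ P) ∧
      sInf {P : Submodule K g | IsPrimeIdeal K g P ∧ J ≤ P} = S.inf id} with hTdef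
  have hHT : H ∈ T := ⟨hH, hc⟩
  have step : ∀ J ∈ T, ∃ J' ∈ T, J < J' := by
    rintro J ⟨hJid, hJ⟩
    have hJtop : J ≠ ⊤ := by
      rintro rfl
      apply hJ
      refine ⟨∅, by simp, ?_⟩
      have hemp : {P : Submodule K g | IsPrimeIdeal K g P ∧ ⊤ ≤ P} = ∅ := by
        ext P
        simp only [Set.mem_setOf_eq, Set.mem_empty_iff_false, iff_false, not_and]
        intro hP hle
        exact hP.2.1 (top_le_iff.1 hle)
      rw [hemp]
      simp
    have hJnp : ¬ IsPrimeIdeal K g J := by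
      intro hP
      apply hJ
      refine ⟨{J}, by simp [hP], ?_⟩
      simp only [Finset.inf_singleton, id]
      refine le_antisymm (sInf_le ⟨hP, le_rfl⟩) (le_sInf ?_)
      rintro P ⟨_, hle⟩
      exact hle
    have hex : ∃ h₁ h₂ : Submodule K g, IsIdeal K g h₁ ∧ IsIdeal K g h₂ ∧
        bk K g h₁ h₂ ≤ J ∧ ¬ h₁ ≤ J ∧ ¬ h₂ ≤ J := by
      by_contra hne
      push_neg at hne
      exact hJnp ⟨hJid, hJtop, fun h₁ h₂ a b c =>
        or_iff_not_imp_left.2 (hne h₁ h₂ a b c)⟩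
    obtain ⟨h₁, h₂, hI1, hI2, hbk, hn1, hn2⟩ := hex
    have hid1 : IsIdeal K g (J ⊔ h₁) := sup_isIdeal hJid hI1
    have hid2 : IsIdeal K g (J ⊔ h₂) := sup_isIdeal hJid hI2
    have hlt1 : J < J ⊔ h₁ := left_lt_sup.2 hn1
    have hlt2 : J < J ⊔ h₂ := left_lt_sup.2 hn2
    by_cases hc1 : (J ⊔ h₁) ∈ T
    · exact ⟨J ⊔ h₁, hc1, hlt1⟩
    by_cases hc2 : (J ⊔ h₂) ∈ T
    · exact ⟨J ⊔ h₂, hc2, hlt2⟩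
    exfalso
    simp only [hTdef, Set.mem_setOf_eq, not_and, not_not] at hc1 hc2
    obtain ⟨S₁, hS₁, hinf₁⟩ := hc1 hid1
    obtain ⟨S₂, hS₂, hinf₂⟩ := hc2 hid2
    apply hJ
    refine ⟨S₁ ∪ S₂, ?_, ?_⟩
    · intro P hP
      rcases Finset.mem_union.1 hP with h | h
      · exact ⟨(hS₁ P h).1, le_trans le_sup_left (hS₁ P h).2⟩
      · exact ⟨(hS₂ P h).1, le_trans le_sup_left (hS₂ P h).2⟩
    · have hsets : {P : Submodule K g | IsPrimeIdeal K g P ∧ J ≤ P} =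
          {P : Submodule K g | IsPrimeIdeal K g P ∧ J ⊔ h₁ ≤ P} ∪
          {P : Submodule K g | IsPrimeIdeal K g P ∧ J ⊔ h₂ ≤ P} := by
        ext P
        simp only [Set.mem_setOf_eq, Set.mem_union]
        constructor
        · rintro ⟨hP, hle⟩
          rcases hP.2.2 h₁ h₂ hI1 hI2 (le_trans hbk hle) with h | h
          · exact Or.inl ⟨hP, sup_le hle h⟩
          · exact Or.inr ⟨hP, sup_le hle h⟩
        · rintro (⟨hP, hle⟩ | ⟨hP, hle⟩) <;> exact ⟨hP, le_trans le_sup_left hle⟩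
      rw [hsets, sInf_union, hinf₁, hinf₂, Finset.inf_union]
  let f : {J // J ∈ T} → {J // J ∈ T} := fun J =>
    ⟨(step J.1 J.2).choose, (step J.1 J.2).choose_spec.1⟩
  have hf : ∀ J : {J // J ∈ T}, J.1 < (f J).1 := fun J => (step J.1 J.2).choose_spec.2
  let I : ℕ → {J // J ∈ T} := fun n => f^[n] ⟨H, hHT⟩
  have hIlt : ∀ n, (I n).1 < (I (n + 1)).1 := by
    intro n
    have hsucc : I (n + 1) = f (I n) := Function.iterate_succ_apply' f n _
    rw [hsucc]
    exact hf (I n)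
  obtain ⟨m, hm⟩ := hmax (fun n => (I n).1) (fun n => (I n).2.1) (fun n => (hIlt n).le)
  exact absurd (hm (m + 1) (Nat.le_succ m)) (hIlt m).ne'
end

section
/- Let g be a semisimple Leibniz algebra satisfying the maximal condition on two-sided ideals (every ascending chain of two-sided ideals of g terminates), where semisimple means that g has a largest solvable two-sided ideal Rad(g) (containing every solvable two-sided ideal) and Rad(g) = Leib(g). Then the intersection of all prime ideals of g equals Leib(g), i.e., Rad_P(g) = Leib(g). -/
universe u v

open Leibniz

namespace PrimeRadicalAux

variable (K : Type u) (g : Type v) [Field K] [AddCommGroup g] [Module K g] [LeibnizAlgebra K g]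

lemma bk_le {A B C : Submodule K g} (h : ∀ a ∈ A, ∀ b ∈ B, ⁅a, b⁆ ∈ C) :
    bk K g A B ≤ C := by
  rw [bk, Submodule.span_le]
  rintro z ⟨a, ha, b, hb, rfl⟩
  exact h a ha b hb

lemma mem_bk {A B : Submodule K g} {a b : g} (ha : a ∈ A) (hb : b ∈ B) :
    ⁅a, b⁆ ∈ bk K g A B :=
  Submodule.subset_span ⟨a, ha, b, hb, rfl⟩

lemma bk_mono {A A' B B' : Submodule K g} (hA : A ≤ A') (hB : B ≤ B') :
    bk K g A B ≤ bk K g A' B' :=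
  bk_le K g fun a ha b hb => mem_bk K g (hA ha) (hB hb)

lemma bk_self_le {A : Submodule K g} (hA : IsIdeal K g A) : bk K g A A ≤ A :=
  bk_le K g fun a _ b hb => (hA a b hb).1

lemma subDerived_mono {A B : Submodule K g} (h : A ≤ B) (n : ℕ) :
    subDerived K g A n ≤ subDerived K g B n := by
  induction n with
  | zero => exact h
  | succ n ih => exact bk_mono K g ih ih

lemma subDerived_succ (A : Submodule K g) (n : ℕ) :
    subDerived K g A (n + 1) = bk K g (subDerived K g A n) (subDerived K g A n) := rfl

lemma subDerived_shift (A : Submodule K g) (n : ℕ) :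
    subDerived K g A (n + 1) = subDerived K g (bk K g A A) n := by
  induction n with
  | zero => rfl
  | succ n ih => rw [subDerived_succ, ih, subDerived_succ]

lemma subDerived_antitone {A : Submodule K g} (hA : IsIdeal K g A) :
    ∀ {i j : ℕ}, i ≤ j → subDerived K g A j ≤ subDerived K g A i := by
  have step : ∀ n, subDerived K g A (n + 1) ≤ subDerived K g A n := by
    intro n
    rw [subDerived_shift]
    exact subDerived_mono K g (bk_self_le K g hA) n
  intro i j hij
  induction hij with
  | refl => exact le_rfl
  | step h ih => exact le_trans (step _) ih

lemma isIdeal_bot : IsIdeal K g (⊥ : Submodule K g) := by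
  intro x a ha
  rw [Submodule.mem_bot] at ha
  subst ha
  rw [bracket_zero K, zero_bracket K]
  exact ⟨Submodule.mem_bot _ |>.2 rfl, Submodule.mem_bot _ |>.2 rfl⟩

lemma isIdeal_sup {A B : Submodule K g} (hA : IsIdeal K g A) (hB : IsIdeal K g B) :
    IsIdeal K g (A ⊔ B) := by
  intro x a ha
  obtain ⟨u, hu, v, hv, rfl⟩ := Submodule.mem_sup.1 ha
  constructor
  · rw [LeibnizAlgebra.bracket_add]
    exact Submodule.add_mem _ (Submodule.mem_sup_left (hA x u hu).1)
      (Submodule.mem_sup_right (hB x v hv).1)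
  · rw [LeibnizAlgebra.add_bracket]
    exact Submodule.add_mem _ (Submodule.mem_sup_left (hA x u hu).2)
      (Submodule.mem_sup_right (hB x v hv).2)

lemma isIdeal_sInf (S : Set (Submodule K g)) (h : ∀ P ∈ S, IsIdeal K g P) :
    IsIdeal K g (sInf S) := by
  intro x a ha
  rw [Submodule.mem_sInf] at ha
  exact ⟨Submodule.mem_sInf.2 fun P hP => (h P hP x a (ha P hP)).1,
    Submodule.mem_sInf.2 fun P hP => (h P hP x a (ha P hP)).2⟩

/-- Left multiplication as a linear map. -/
def adL (x : g) : g →ₗ[K] g where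
  toFun y := ⁅x, y⁆
  map_add' a b := LeibnizAlgebra.bracket_add x a b
  map_smul' c y := LeibnizAlgebra.bracket_smul c x y

/-- Right multiplication as a linear map. -/
def adR (x : g) : g →ₗ[K] g where
  toFun y := ⁅y, x⁆
  map_add' a b := LeibnizAlgebra.add_bracket a b x
  map_smul' c y := LeibnizAlgebra.smul_bracket c y x

lemma sq_bracket (x z : g) : ⁅(⁅x, x⁆ : g), z⁆ = 0 :=
  right_eq_add.mp (LeibnizAlgebra.leibniz x x z)

lemma leib_bracket_eq_zero {a : g} (ha : a ∈ leibIdeal K g) (x : g) : ⁅a, x⁆ = 0 := by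
  have hle : leibIdeal K g ≤ LinearMap.ker (adR K g x) := by
    rw [leibIdeal, Submodule.span_le]
    rintro z ⟨y, rfl⟩
    exact LinearMap.mem_ker.2 (sq_bracket K g y x)
  exact LinearMap.mem_ker.1 (hle ha)

lemma symm_mem_leib (u v : g) : ⁅u, v⁆ + ⁅v, u⁆ ∈ leibIdeal K g := by
  have hu : (⁅u, u⁆ : g) ∈ leibIdeal K g := Submodule.subset_span ⟨u, rfl⟩
  have hv : (⁅v, v⁆ : g) ∈ leibIdeal K g := Submodule.subset_span ⟨v, rfl⟩
  have huv : (⁅u + v, u + v⁆ : g) ∈ leibIdeal K g := Submodule.subset_span ⟨u + v, rfl⟩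
  have hexp : (⁅u, v⁆ : g) + ⁅v, u⁆ = ⁅u + v, u + v⁆ - ⁅u, u⁆ - ⁅v, v⁆ := by
    rw [LeibnizAlgebra.add_bracket, LeibnizAlgebra.bracket_add, LeibnizAlgebra.bracket_add]
    abel
  rw [hexp]
  exact Submodule.sub_mem _ (Submodule.sub_mem _ huv hu) hv

lemma leib_isIdeal : IsIdeal K g (leibIdeal K g) := by
  intro x a ha
  constructor
  · have hle : leibIdeal K g ≤ Submodule.comap (adL K g x) (leibIdeal K g) := by
      rw [leibIdeal, Submodule.span_le]
      rintro z ⟨y, rfl⟩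
      have : (⁅x, ⁅y, y⁆⁆ : g) ∈ leibIdeal K g := by
        rw [LeibnizAlgebra.leibniz]
        exact symm_mem_leib K g ⁅x, y⁆ y
      exact Submodule.mem_comap.2 this
    exact Submodule.mem_comap.1 (hle ha)
  · rw [leib_bracket_eq_zero K g ha x]
    exact Submodule.zero_mem _

/-- Binary trees with leaves labeled by submodules. -/
inductive BT (σ : Type v) : Type v
  | leaf : σ → BT σ
  | node : BT σ → BT σ → BT σ

/-- The value of a tree: iterated brackets of the leaf labels. -/
def btval : BT (Submodule K g) → Submodule K g
  | .leaf s => s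
  | .node l r => bk K g (btval l) (btval r)

/-- The height of a tree. -/
def btht : BT (Submodule K g) → ℕ
  | .leaf _ => 0
  | .node l r => max (btht l) (btht r) + 1

/-- All leaves are prime ideals or `⊤`. -/
def btOK : BT (Submodule K g) → Prop
  | .leaf s => IsPrimeIdeal K g s ∨ s = ⊤
  | .node l r => btOK l ∧ btOK r

lemma exists_maximal
    (hmax : ∀ I : ℕ → Submodule K g, (∀ n, IsIdeal K g (I n)) → (∀ n, I n ≤ I (n + 1)) →
      ∃ m : ℕ, ∀ n : ℕ, m ≤ n → I n = I m)
    (S : Set (Submodule K g)) (hS : ∀ I ∈ S, IsIdeal K g I) (hne : S.Nonempty) :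
    ∃ M ∈ S, ∀ J ∈ S, M ≤ J → J = M := by
  by_contra hcon
  push_neg at hcon
  obtain ⟨I₀, hI₀⟩ := hne
  choose f hfS hfle hfne using hcon
  let c : ℕ → {I : Submodule K g // I ∈ S} := fun n =>
    Nat.rec ⟨I₀, hI₀⟩ (fun _ p => ⟨f p.1 p.2, hfS p.1 p.2⟩) n
  have hstep : ∀ n, (c (n + 1)).1 = f (c n).1 (c n).2 := fun n => rfl
  obtain ⟨m, hm⟩ := hmax (fun n => (c n).1) (fun n => hS _ (c n).2)
    (fun n => hfle (c n).1 (c n).2)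
  have h1 := hm (m + 1) (Nat.le_succ m)
  rw [hstep] at h1
  exact hfne (c m).1 (c m).2 h1

lemma exists_tree
    (hmax : ∀ I : ℕ → Submodule K g, (∀ n, IsIdeal K g (I n)) → (∀ n, I n ≤ I (n + 1)) →
      ∃ m : ℕ, ∀ n : ℕ, m ≤ n → I n = I m) :
    ∃ T : BT (Submodule K g), btOK K g T ∧ btval K g T ≤ ⊥ := by
  by_contra hcon
  set S : Set (Submodule K g) :=
    {I | IsIdeal K g I ∧ ¬ ∃ T : BT (Submodule K g), btOK K g T ∧ btval K g T ≤ I} with hSdef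
  have hne : S.Nonempty := ⟨⊥, ⟨isIdeal_bot K g, hcon⟩⟩
  obtain ⟨M, hMS, hMmax⟩ := exists_maximal K g hmax S (fun I hI => hI.1) hne
  obtain ⟨hMideal, hMnotree⟩ := hMS
  have hM : ¬ (IsPrimeIdeal K g M ∨ M = ⊤) := by
    intro h
    exact hMnotree ⟨BT.leaf M, h, le_rfl⟩
  have hnp : ¬ IsPrimeIdeal K g M := fun h => hM (Or.inl h)
  have hnt : M ≠ ⊤ := fun h => hM (Or.inr h)
  have hC : ¬ ∀ h₁ h₂ : Submodule K g, IsIdeal K g h₁ → IsIdeal K g h₂ →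
      bk K g h₁ h₂ ≤ M → h₁ ≤ M ∨ h₂ ≤ M := fun h => hnp ⟨hMideal, hnt, h⟩
  push_neg at hC
  obtain ⟨h₁, h₂, hi₁, hi₂, hbk, hn1, hn2⟩ := hC
  have hA : IsIdeal K g (M ⊔ h₁) := isIdeal_sup K g hMideal hi₁
  have hB : IsIdeal K g (M ⊔ h₂) := isIdeal_sup K g hMideal hi₂
  have hAne : M ⊔ h₁ ≠ M := fun h => hn1 (le_sup_right.trans h.le)
  have hBne : M ⊔ h₂ ≠ M := fun h => hn2 (le_sup_right.trans h.le)
  have hAtree : ∃ T : BT (Submodule K g), btOK K g T ∧ btval K g T ≤ M ⊔ h₁ := by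
    by_contra h
    exact hAne (hMmax _ ⟨hA, h⟩ le_sup_left)
  have hBtree : ∃ T : BT (Submodule K g), btOK K g T ∧ btval K g T ≤ M ⊔ h₂ := by
    by_contra h
    exact hBne (hMmax _ ⟨hB, h⟩ le_sup_left)
  obtain ⟨TA, hTAok, hTAval⟩ := hAtree
  obtain ⟨TB, hTBok, hTBval⟩ := hBtree
  have hAB : bk K g (M ⊔ h₁) (M ⊔ h₂) ≤ M := by
    apply bk_le
    intro a ha b hb
    obtain ⟨m₁, hm₁, x₁, hx₁, rfl⟩ := Submodule.mem_sup.1 ha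
    obtain ⟨m₂, hm₂, x₂, hx₂, rfl⟩ := Submodule.mem_sup.1 hb
    rw [LeibnizAlgebra.add_bracket]
    refine Submodule.add_mem _ (hMideal (m₂ + x₂) m₁ hm₁).2 ?_
    rw [LeibnizAlgebra.bracket_add]
    exact Submodule.add_mem _ (hMideal x₁ m₂ hm₂).1 (hbk (mem_bk K g hx₁ hx₂))
  refine hMnotree ⟨BT.node TA TB, ⟨hTAok, hTBok⟩, ?_⟩
  exact le_trans (bk_mono K g hTAval hTBval) hAB

lemma tree_bound (N : Submodule K g) (hN : IsIdeal K g N)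
    (hNle : ∀ P : Submodule K g, IsPrimeIdeal K g P → N ≤ P) :
    ∀ T : BT (Submodule K g), btOK K g T → subDerived K g N (btht K g T) ≤ btval K g T := by
  intro T
  induction T with
  | leaf s =>
    intro h
    rcases h with h | h
    · exact hNle s h
    · rw [btval, h]
      exact le_top
  | node l r ihl ihr =>
    intro h
    obtain ⟨hl, hr⟩ := h
    have e1 : btht K g (BT.node l r) = max (btht K g l) (btht K g r) + 1 := rfl
    have e2 : btval K g (BT.node l r) = bk K g (btval K g l) (btval K g r) := rfl
    rw [e1, e2, subDerived_succ]
    refine le_trans (bk_mono K g ?_ ?_) (bk_mono K g (ihl hl) (ihr hr))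
    · exact subDerived_antitone K g hN (le_max_left _ _)
    · exact subDerived_antitone K g hN (le_max_right _ _)

end PrimeRadicalAux

/-- For a semisimple Leibniz algebra (largest solvable ideal equals `Leib(g)`)
satisfying the maximal condition on two-sided ideals, the intersection of all prime
ideals equals `Leib(g)`. -/
theorem primeRadical_eq_leib_of_semisimple (K : Type u) (g : Type v) [Field K] [AddCommGroup g] [Module K g]
    [LeibnizAlgebra K g]
    (hmax : ∀ I : ℕ → Submodule K g, (∀ n, IsIdeal K g (I n)) → (∀ n, I n ≤ I (n + 1)) →
      ∃ m : ℕ, ∀ n : ℕ, m ≤ n → I n = I m)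
    (R : Submodule K g) (hR : IsSolvableIdeal K g R)
    (hRmax : ∀ I : Submodule K g, IsSolvableIdeal K g I → I ≤ R)
    (hsemi : R = leibIdeal K g) :
    sInf {P : Submodule K g | IsPrimeIdeal K g P} = leibIdeal K g := by
  classical
  open PrimeRadicalAux in
  set N : Submodule K g := sInf {P : Submodule K g | IsPrimeIdeal K g P} with hNdef
  have hNideal : IsIdeal K g N :=
    isIdeal_sInf K g _ (fun P hP => hP.1)
  have hNleP : ∀ P : Submodule K g, IsPrimeIdeal K g P → N ≤ P := fun P hP => sInf_le hP
  obtain ⟨T, hTOK, hTval⟩ := exists_tree K g hmax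
  have hsolv : subDerived K g N (btht K g T) = ⊥ :=
    le_bot_iff.1 (le_trans (tree_bound K g N hNideal hNleP T hTOK) hTval)
  have hNR : N ≤ R := hRmax N ⟨hNideal, ⟨btht K g T, hsolv⟩⟩
  apply le_antisymm
  · rw [← hsemi]
    exact hNR
  · apply le_sInf
    intro P hP
    have hbkP : bk K g (leibIdeal K g) (leibIdeal K g) ≤ P :=
      bk_le K g fun a ha b _ => by
        rw [leib_bracket_eq_zero K g ha b]; exact P.zero_mem
    rcases hP.2.2 (leibIdeal K g) (leibIdeal K g) (leib_isIdeal K g) (leib_isIdeal K g) hbkP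
      with h | h
    · exact h
    · exact h
end
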